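/- Let m ≥ √21/3. Then U₁₀(φ; m) = m⁴ − 2(φ² + 2/3)m² + (10/3)φ⁴ − 2φ² + 1 ≥ 0 for all φ ∈ ℝ, and hence the transformed potential V of W₁₀(φ;m) = φ²(φ²−1)²(φ²−m²)² satisfies V'(φ) ≥ 0 for all φ > 0 with W₁₀(φ;m) > 0. -/

import Mathlib

/-!
Write `W = g²` with `g φ = φ (φ² - 1) (φ² - m²)`. Wherever `g ≠ 0` the transformed potential
`W'² / W - W''` equals `2 (g'² - g g'')`, so its derivative is `2 (g' g'' - g g''') = 24 φ³ U₁₀(φ; m)`.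
In the variables `s = m² - 7/3` and `t = φ²`, `U₁₀` is `(s - t + 1)² + (7/3) (t - 1)² + (4/3) s`,
which is nonnegative as soon as `m² ≥ 7/3`.
-/

open Real Filter Topology

lemma seven_thirds_le_sq {m : ℝ} (hm : √21 / 3 ≤ m) : 7 / 3 ≤ m ^ 2 := by
  calc (7 / 3 : ℝ) = (√21 / 3) ^ 2 := by rw [div_pow, sq_sqrt (by norm_num)]; norm_num
    _ ≤ m ^ 2 := pow_le_pow_left₀ (by positivity) hm 2

lemma u10_nonneg_of_seven_thirds_le {M : ℝ} (hM : 7 / 3 ≤ M) (t : ℝ) :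
    0 ≤ M ^ 2 - 2 * (t + 2 / 3) * M + 10 / 3 * t ^ 2 - 2 * t + 1 := by
  have hsos : M ^ 2 - 2 * (t + 2 / 3) * M + 10 / 3 * t ^ 2 - 2 * t + 1
      = (M - t - 4 / 3) ^ 2 + 7 / 3 * (t - 1) ^ 2 + 4 / 3 * (M - 7 / 3) := by ring
  have hM' := sub_nonneg.2 hM
  rw [hsos]
  positivity

section TransformedPotential

variable {g : ℝ → ℝ}

noncomputable def transformedPotential (W : ℝ → ℝ) (x : ℝ) : ℝ :=
  deriv W x ^ 2 / W x - iteratedDeriv 2 W x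

lemma hasDerivAt_iteratedDeriv {n : WithTop ℕ∞} (hg : ContDiff ℝ n g) {k : ℕ} (hk : k < n)
    (x : ℝ) : HasDerivAt (iteratedDeriv k g) (iteratedDeriv (k + 1) g x) x := by
  rw [iteratedDeriv_succ]
  exact (hg.differentiable_iteratedDeriv k hk x).hasDerivAt

lemma deriv_sq (hg : Differentiable ℝ g) :
    deriv (fun y => g y ^ 2) = fun y => 2 * g y * deriv g y :=
  funext fun y => ((hg y).hasDerivAt.pow 2).deriv.trans (by ring)

lemma iteratedDeriv_two_sq (hg : ContDiff ℝ 2 g) :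
    iteratedDeriv 2 (fun y => g y ^ 2)
      = fun y => 2 * (deriv g y ^ 2 + g y * iteratedDeriv 2 g y) := by
  have hg₀ := hasDerivAt_iteratedDeriv hg (k := 0) (by norm_num)
  have hg₁ := hasDerivAt_iteratedDeriv hg (k := 1) (by norm_num)
  simp only [iteratedDeriv_zero, iteratedDeriv_one, zero_add, Nat.reduceAdd] at hg₀ hg₁
  rw [iteratedDeriv_succ, iteratedDeriv_one, deriv_sq fun y => (hg₀ y).differentiableAt]
  exact funext fun y => (((hg₀ y).const_mul 2).mul (hg₁ y)).deriv.trans (by ring)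

lemma transformedPotential_sq (hg : ContDiff ℝ 2 g) {x : ℝ} (hx : g x ≠ 0) :
    transformedPotential (fun y => g y ^ 2) x
      = 2 * (deriv g x ^ 2 - g x * iteratedDeriv 2 g x) := by
  rw [transformedPotential, deriv_sq (hg.differentiable (by norm_num)), iteratedDeriv_two_sq hg]
  field_simp
  ring

lemma deriv_transformedPotential_sq (hg : ContDiff ℝ 3 g) {x : ℝ} (hx : g x ≠ 0) :
    deriv (transformedPotential fun y => g y ^ 2) x
      = 2 * (deriv g x * iteratedDeriv 2 g x - g x * iteratedDeriv 3 g x) := by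
  have hloc : transformedPotential (fun y => g y ^ 2)
      =ᶠ[𝓝 x] fun y => 2 * (deriv g y ^ 2 - g y * iteratedDeriv 2 g y) :=
    (hg.continuous.continuousAt.eventually_ne hx).mono
      fun y hy => transformedPotential_sq (hg.of_le (by norm_num)) hy
  have hg₀ := hasDerivAt_iteratedDeriv hg (k := 0) (by norm_num) x
  have hg₁ := hasDerivAt_iteratedDeriv hg (k := 1) (by norm_num) x
  have hg₂ := hasDerivAt_iteratedDeriv hg (k := 2) (by norm_num) x
  simp only [iteratedDeriv_zero, iteratedDeriv_one, zero_add, Nat.reduceAdd] at hg₀ hg₁ hg₂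
  rw [hloc.deriv_eq]
  exact (((hg₁.pow 2).sub (hg₀.mul hg₂)).const_mul 2).deriv.trans (by ring)

end TransformedPotential

section Phi10

variable (m : ℝ)

def phi10Root (x : ℝ) : ℝ := x * (x ^ 2 - 1) * (x ^ 2 - m ^ 2)

lemma contDiff_phi10Root : ContDiff ℝ 3 (phi10Root m) := by
  unfold phi10Root
  fun_prop

lemma hasDerivAt_phi10Root (x : ℝ) :
    HasDerivAt (phi10Root m) (5 * x ^ 4 - 3 * (1 + m ^ 2) * x ^ 2 + m ^ 2) x := by
  have hexpand : phi10Root m = fun y => y ^ 5 - (1 + m ^ 2) * y ^ 3 + m ^ 2 * y :=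
    funext fun y => by simp only [phi10Root]; ring
  rw [hexpand]
  have h := ((hasDerivAt_pow 5 x).sub ((hasDerivAt_pow 3 x).const_mul (1 + m ^ 2))).add
    ((hasDerivAt_id x).const_mul (m ^ 2))
  exact h.congr_deriv (by simp only [Nat.cast_ofNat, Nat.add_one_sub_one, mul_one]; ring)

lemma deriv_phi10Root :
    deriv (phi10Root m) = fun x => 5 * x ^ 4 - 3 * (1 + m ^ 2) * x ^ 2 + m ^ 2 :=
  funext fun x => (hasDerivAt_phi10Root m x).deriv

lemma iteratedDeriv_two_phi10Root :
    iteratedDeriv 2 (phi10Root m) = fun x => 20 * x ^ 3 - 6 * (1 + m ^ 2) * x := by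
  rw [iteratedDeriv_succ, iteratedDeriv_one, deriv_phi10Root]
  funext x
  have h := ((hasDerivAt_pow 4 x).const_mul 5).sub
    ((hasDerivAt_pow 2 x).const_mul (3 * (1 + m ^ 2)))
  exact (h.add_const (m ^ 2)).deriv.trans
    (by simp only [Nat.cast_ofNat, Nat.add_one_sub_one, pow_one]; ring)

lemma iteratedDeriv_three_phi10Root :
    iteratedDeriv 3 (phi10Root m) = fun x => 60 * x ^ 2 - 6 * (1 + m ^ 2) := by
  rw [iteratedDeriv_succ, iteratedDeriv_two_phi10Root]
  funext x
  have h := ((hasDerivAt_pow 3 x).const_mul 20).sub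
    ((hasDerivAt_id x).const_mul (6 * (1 + m ^ 2)))
  exact h.deriv.trans (by simp only [Nat.cast_ofNat, Nat.add_one_sub_one, mul_one]; ring)

end Phi10

theorem phi10_repulsivity (m : ℝ) (hm : Real.sqrt 21 / 3 ≤ m) :
    let U : ℝ → ℝ := fun φ => m ^ 4 - 2 * (φ ^ 2 + 2 / 3) * m ^ 2
        + (10 / 3) * φ ^ 4 - 2 * φ ^ 2 + 1
    let W : ℝ → ℝ := fun φ => φ ^ 2 * (φ ^ 2 - 1) ^ 2 * (φ ^ 2 - m ^ 2) ^ 2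
    let V : ℝ → ℝ := fun φ => (deriv W φ) ^ 2 / W φ - iteratedDeriv 2 W φ
    (∀ φ : ℝ, 0 ≤ U φ) ∧
    (∀ φ : ℝ, 0 < φ → 0 < W φ → 0 ≤ deriv V φ) := by
  intro U W V
  have hU (φ : ℝ) : 0 ≤ U φ := by
    have h := u10_nonneg_of_seven_thirds_le (seven_thirds_le_sq hm) (φ ^ 2)
    simp only [U]
    convert h using 1
    ring
  refine ⟨hU, fun φ hφ hW => ?_⟩
  have hW_eq : W = fun x => phi10Root m x ^ 2 :=
    funext fun x => by simp only [W, phi10Root]; ring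
  have hroot : phi10Root m φ ≠ 0 := by
    intro h
    simp [hW_eq, h] at hW
  have hV : deriv V φ = 24 * φ ^ 3 * U φ := by
    change deriv (transformedPotential W) φ = _
    rw [hW_eq, deriv_transformedPotential_sq (contDiff_phi10Root m) hroot, deriv_phi10Root,
      iteratedDeriv_two_phi10Root, iteratedDeriv_three_phi10Root]
    simp only [phi10Root, U]
    ring
  rw [hV]
  exact mul_nonneg (by positivity) (hU φ)
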